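/- arXiv:1706.08266 — 6 statements merged into one kernel-verified Lean document; each statement's English description precedes it below -/
import Mathlib

section
/- Let p and q be coprime integers with p > q > 1. Then the topological closure in ℝ of the span-set Span = {span(n) : n ∈ ℕ} equals ρ of the set of ω-words that label a branch of T_{p/q} from 0 and have all their digits in D = {p−2q+1, …, p−1}; that is, closure(Span) = {ρ(w) : w labels a branch of T_{p/q} from 0 and w_k ∈ D for all k}. -/
/-- `w` labels a branch of the base-p/q automaton with digit set `E` from state `n`:
there are states `s 0 = n, s 1, s 2, …` with `q·s(k+1) = p·s k + w k` and `w k ∈ E`. -/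
def IsBranch (p q : ℕ) (E : Set ℤ) (n : ℕ) (w : ℕ → ℤ) : Prop :=
  ∃ s : ℕ → ℕ, s 0 = n ∧ ∀ k : ℕ, (q : ℤ) * s (k + 1) = p * s k + w k ∧ w k ∈ E

/-- `u` (a word of length `ℓ`) labels a path from `n` to `m` in the base-p/q automaton
with digit set `E`. -/
def IsPath (p q : ℕ) (E : Set ℤ) (n m ℓ : ℕ) (u : ℕ → ℤ) : Prop :=
  ∃ s : ℕ → ℕ, s 0 = n ∧ s ℓ = m ∧
    ∀ k < ℓ, (q : ℤ) * s (k + 1) = p * s k + u k ∧ u k ∈ E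

/-- The canonical digit alphabet `A_p = {0, 1, …, p−1}`. -/
def Ap (p : ℕ) : Set ℤ := Set.Icc 0 ((p : ℤ) - 1)

/-- The lower alphabet `{0, 1, …, q−1}`. -/
def LowAlph (q : ℕ) : Set ℤ := Set.Icc 0 ((q : ℤ) - 1)

/-- The upper alphabet `{p−q, …, p−1}`. -/
def UpAlph (p q : ℕ) : Set ℤ := Set.Icc ((p : ℤ) - q) ((p : ℤ) - 1)

/-- The alphabet `D = {p−2q+1, …, p−1}` of the automaton `S_{p/q}`. -/
def Dalph (p q : ℕ) : Set ℤ := Set.Icc ((p : ℤ) - 2 * q + 1) ((p : ℤ) - 1)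

/-- Evaluation after the radix point: `ρ(w) = Σ_{i≥1} (w_i/q)·(q/p)^i`
(here `w k` is the `(k+1)`-st digit). -/
noncomputable def rho (p q : ℕ) (w : ℕ → ℤ) : ℝ :=
  ∑' i : ℕ, ((w i : ℝ) / q) * ((q : ℝ) / p) ^ (i + 1)

/-!
Write `r = q/p`. If a branch with digits in `A_p` passes through the states `s 0, s 1, …`, its
partial sums telescope, so `ρ(w) + s 0 = r^N (s N + ρ(tail))` with `0 ≤ ρ(tail) ≤ (p-1)/(p-q)`.
Hence `span n` is `r^N g` up to `O(r^N)`, where `g` is the difference of the states at depth `N`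
of `maxword n` and `minword n`, and `ρ(w)` for a branch `w` from `0` with digits in `D` is
`r^N` times its state at depth `N`, up to `O(r^N)`. Both inclusions therefore reduce to the claim
that these gaps are exactly the states reachable from `0` in `N` steps with digits in `A_p ∩ D`,
together with the closedness of the right-hand side (a continuous image of a compact set of
state sequences).

The gaps themselves read digits in `D`; if `p ≥ 2q - 1` these lie in `A_p`, and otherwise
`A_p ⊆ D`, the reachable states fill `[0, maxNext^N 0]`, and a gap never exceeds
`maxNext^N 0`. Conversely, replacing `n` by `n + j q^N` adds `j p^N` to both states at depth
`N`; since `p` is invertible mod `q`, `j` can be chosen so that the next digits of the two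
branches move the gap to any admissible successor.
-/

namespace RationalBase

/-- The child of `m` along `minword`: the unique `s` with `q s - p m ∈ {0, …, q-1}`. -/
def minNext (p q m : ℕ) : ℕ := (p * m + (q - 1)) / q

/-- The child of `m` along `maxword`: the unique `s` with `q s - p m ∈ {p-q, …, p-1}`. -/
def maxNext (p q m : ℕ) : ℕ := (p * m + (p - 1)) / q

def digit (p q : ℕ) (s : ℕ → ℕ) (k : ℕ) : ℤ := q * s (k + 1) - p * s k

section Arithmetic

variable {p q : ℕ}

lemma minNext_spec (hq : 0 < q) (m : ℕ) :
    (p : ℤ) * m ≤ q * minNext p q m ∧ (q : ℤ) * minNext p q m ≤ p * m + q - 1 := by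
  have h₁ := Nat.div_add_mod (p * m + (q - 1)) q
  have h₂ := Nat.mod_lt (p * m + (q - 1)) hq
  unfold minNext
  omega

lemma maxNext_spec (hq : 0 < q) (hqp : q ≤ p) (m : ℕ) :
    (p : ℤ) * m + p - q ≤ q * maxNext p q m ∧ (q : ℤ) * maxNext p q m ≤ p * m + p - 1 := by
  have h₁ := Nat.div_add_mod (p * m + (p - 1)) q
  have h₂ := Nat.mod_lt (p * m + (p - 1)) hq
  unfold maxNext
  omega

lemma eq_of_mul_lt_mul_add {q : ℤ} (hq : 0 < q) {a b : ℤ}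
    (hab : q * a < q * b + q) (hba : q * b < q * a + q) : a = b := by
  have h₁ : a < b + 1 := lt_of_mul_lt_mul_left (by linarith) hq.le
  have h₂ : b < a + 1 := lt_of_mul_lt_mul_left (by linarith) hq.le
  omega

lemma eq_minNext (hq : 0 < q) {m s : ℕ} {d : ℤ} (hs : (q : ℤ) * s = p * m + d)
    (hd : d ∈ LowAlph q) : s = minNext p q m := by
  obtain ⟨hd₀, hd₁⟩ := hd
  have := minNext_spec (p := p) hq m
  exact_mod_cast eq_of_mul_lt_mul_add (a := s) (b := minNext p q m) (by omega : (0 : ℤ) < q)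
    (by omega) (by omega)

lemma eq_maxNext (hq : 0 < q) (hqp : q ≤ p) {m s : ℕ} {d : ℤ} (hs : (q : ℤ) * s = p * m + d)
    (hd : d ∈ UpAlph p q) : s = maxNext p q m := by
  obtain ⟨hd₀, hd₁⟩ := hd
  have := maxNext_spec hq hqp m
  exact_mod_cast eq_of_mul_lt_mul_add (a := s) (b := maxNext p q m) (by omega : (0 : ℤ) < q)
    (by omega) (by omega)

lemma minNext_mono : Monotone (minNext p q) := fun _ _ h =>
  Nat.div_le_div_right (by have := Nat.mul_le_mul_left p h; omega)

lemma maxNext_mono : Monotone (maxNext p q) := fun _ _ h =>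
  Nat.div_le_div_right (by have := Nat.mul_le_mul_left p h; omega)

lemma minNext_le_maxNext (hqp : q ≤ p) (m : ℕ) : minNext p q m ≤ maxNext p q m :=
  Nat.div_le_div_right (by omega)

lemma minNext_iterate_le_maxNext_iterate (hqp : q ≤ p) (N n : ℕ) :
    (minNext p q)^[N] n ≤ (maxNext p q)^[N] n := by
  induction N with
  | zero => rfl
  | succ N ih =>
    rw [Function.iterate_succ_apply', Function.iterate_succ_apply']
    exact (minNext_mono ih).trans (minNext_le_maxNext hqp _)

lemma minNext_add_mul (hq : 0 < q) (m j : ℕ) :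
    minNext p q (m + j * q) = minNext p q m + j * p := by
  rw [minNext, minNext, ← Nat.add_mul_div_right _ _ hq]
  congr 1
  ring

lemma maxNext_add_mul (hq : 0 < q) (m j : ℕ) :
    maxNext p q (m + j * q) = maxNext p q m + j * p := by
  rw [maxNext, maxNext, ← Nat.add_mul_div_right _ _ hq]
  congr 1
  ring

lemma iterate_add_mul_pow {f : ℕ → ℕ} (hf : ∀ m j, f (m + j * q) = f m + j * p) (N : ℕ) :
    ∀ n j, f^[N] (n + j * q ^ N) = f^[N] n + j * p ^ N := by
  induction N with
  | zero => simp
  | succ N ih =>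
    intro n j
    rw [Function.iterate_succ_apply, Function.iterate_succ_apply, pow_succ, ← mul_assoc, hf,
      mul_right_comm, ih]
    ring

lemma maxNext_le_minNext_add (hq : 0 < q) (hqp : q ≤ p) {a b : ℕ} (hba : b ≤ a) :
    maxNext p q a ≤ minNext p q b + maxNext p q (a - b) := by
  have h₁ := (maxNext_spec hq hqp a).2
  have h₂ := (minNext_spec (p := p) hq b).1
  have h₃ := (maxNext_spec hq hqp (a - b)).1
  push_cast [Nat.cast_sub hba] at h₃
  have : (maxNext p q a : ℤ) < minNext p q b + maxNext p q (a - b) + 1 :=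
    lt_of_mul_lt_mul_left (a := (q : ℤ)) (by nlinarith) (by positivity)
  omega

end Arithmetic

/-- The state at depth `N` of the branch labelled by `maxword n - minword n`; the subtraction
never truncates (`minNext_iterate_le_maxNext_iterate`). -/
def gap (p q n N : ℕ) : ℕ := (maxNext p q)^[N] n - (minNext p q)^[N] n

section Gap

variable {p q : ℕ}

lemma cast_gap {R : Type*} [AddGroupWithOne R] (hqp : q ≤ p) (n N : ℕ) :
    (gap p q n N : R) = ((maxNext p q)^[N] n : R) - ((minNext p q)^[N] n : R) := by
  rw [gap, Nat.cast_sub (minNext_iterate_le_maxNext_iterate hqp N n)]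

lemma digit_gap_mem (hq : 0 < q) (hqp : q ≤ p) (n k : ℕ) :
    digit p q (gap p q n) k ∈ Dalph p q := by
  have hmax := maxNext_spec hq hqp ((maxNext p q)^[k] n)
  have hmin := minNext_spec (p := p) hq ((minNext p q)^[k] n)
  rw [← Function.iterate_succ_apply' (maxNext p q)] at hmax
  rw [← Function.iterate_succ_apply' (minNext p q)] at hmin
  simp only [digit, cast_gap hqp, Dalph, Set.mem_Icc]
  constructor <;> linarith [hmax.1, hmax.2, hmin.1, hmin.2]

lemma gap_le_maxNext_iterate_zero (hq : 0 < q) (hqp : q ≤ p) (n N : ℕ) :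
    gap p q n N ≤ (maxNext p q)^[N] 0 := by
  induction N with
  | zero => simp [gap]
  | succ N ih =>
    have hle := minNext_iterate_le_maxNext_iterate hqp N n
    have := maxNext_le_minNext_add hq hqp hle
    have := maxNext_mono (p := p) (q := q) ih
    simp only [gap, Function.iterate_succ_apply'] at *
    omega

end Gap

section Branches

variable {p q : ℕ}

lemma isBranch_iff {E : Set ℤ} {n : ℕ} {w : ℕ → ℤ} :
    IsBranch p q E n w ↔ ∃ s : ℕ → ℕ, s 0 = n ∧ w = digit p q s ∧ ∀ k, digit p q s k ∈ E := by
  constructor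
  · rintro ⟨s, hs₀, hs⟩
    have hw : w = digit p q s := funext fun k => by rw [digit, (hs k).1]; ring
    exact ⟨s, hs₀, hw, fun k => hw ▸ (hs k).2⟩
  · rintro ⟨s, hs₀, rfl, hs⟩
    exact ⟨s, hs₀, fun k => ⟨by rw [digit]; ring, hs k⟩⟩

lemma IsBranch.mem {E : Set ℤ} {n : ℕ} {w : ℕ → ℤ} (h : IsBranch p q E n w) (k : ℕ) : w k ∈ E :=
  let ⟨_, _, hs⟩ := h; (hs k).2

lemma IsBranch.eq_digit_minNext (hq : 0 < q) {n : ℕ} {w : ℕ → ℤ}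
    (h : IsBranch p q (LowAlph q) n w) : w = digit p q (fun k => (minNext p q)^[k] n) := by
  obtain ⟨s, rfl, rfl, hs⟩ := isBranch_iff.mp h
  congr 1
  funext k
  induction k with
  | zero => rfl
  | succ k ih =>
    rw [Function.iterate_succ_apply', ← ih]; exact eq_minNext hq (by rw [digit]; ring) (hs k)

lemma IsBranch.eq_digit_maxNext (hq : 0 < q) (hqp : q ≤ p) {n : ℕ} {w : ℕ → ℤ}
    (h : IsBranch p q (UpAlph p q) n w) : w = digit p q (fun k => (maxNext p q)^[k] n) := by
  obtain ⟨s, rfl, rfl, hs⟩ := isBranch_iff.mp h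
  congr 1
  funext k
  induction k with
  | zero => rfl
  | succ k ih =>
    rw [Function.iterate_succ_apply', ← ih]; exact eq_maxNext hq hqp (by rw [digit]; ring) (hs k)

lemma digit_maxNext_mem (hq : 0 < q) (hqp : q ≤ p) (m k : ℕ) :
    digit p q (fun k => (maxNext p q)^[k] m) k ∈ UpAlph p q := by
  have := maxNext_spec hq hqp ((maxNext p q)^[k] m)
  simp only [digit, Function.iterate_succ_apply', UpAlph, Set.mem_Icc]
  omega

lemma lowAlph_subset_ap (hqp : q ≤ p) : LowAlph q ⊆ Ap p := fun _ ⟨h₀, h₁⟩ => ⟨h₀, by omega⟩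

lemma upAlph_subset (hqp : q ≤ p) : UpAlph p q ⊆ Ap p ∩ Dalph p q := by
  rintro x ⟨h₀, h₁⟩
  exact ⟨⟨by omega, h₁⟩, ⟨by omega, h₁⟩⟩

end Branches

section Evaluation

variable {p q : ℕ}

lemma digit_shift (s : ℕ → ℕ) (N : ℕ) :
    digit p q (fun k => s (k + N)) = fun k => digit p q s (k + N) := by
  funext k
  simp only [digit, Nat.add_right_comm]

lemma rho_term_mem_Icc {w : ℕ → ℤ} (hw : ∀ k, w k ∈ Ap p) (i : ℕ) :
    (w i : ℝ) / q * ((q : ℝ) / p) ^ (i + 1)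
      ∈ Set.Icc 0 (((p : ℝ) - 1) / q * ((q : ℝ) / p) ^ (i + 1)) := by
  obtain ⟨h₀, h₁⟩ := hw i
  have h₀' : (0 : ℝ) ≤ w i := by exact_mod_cast h₀
  have h₁' : (w i : ℝ) ≤ p - 1 := by exact_mod_cast h₁
  constructor
  · positivity
  · gcongr

lemma summable_mul_pow_succ (hq : 0 < q) (hqp : q < p) (c : ℝ) :
    Summable fun i : ℕ => c * ((q : ℝ) / p) ^ (i + 1) := by
  have hp : (0 : ℝ) < p := by exact_mod_cast hq.trans hqp
  refine ((summable_geometric_of_lt_one (r := (q : ℝ) / p) (by positivity) ?_).mul_left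
    (c * (q / p))).congr fun i => by ring
  rw [div_lt_one hp]
  exact_mod_cast hqp

lemma summable_rho {w : ℕ → ℤ} (hq : 0 < q) (hqp : q < p) (hw : ∀ k, w k ∈ Ap p) :
    Summable fun i => (w i : ℝ) / q * ((q : ℝ) / p) ^ (i + 1) :=
  (summable_mul_pow_succ hq hqp _).of_nonneg_of_le (fun i => (rho_term_mem_Icc hw i).1)
    fun i => (rho_term_mem_Icc hw i).2

lemma rho_mem_Icc {w : ℕ → ℤ} (hq : 0 < q) (hqp : q < p) (hw : ∀ k, w k ∈ Ap p) :
    rho p q w ∈ Set.Icc 0 (((p : ℝ) - 1) / (p - q)) := by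
  have hp : (0 : ℝ) < p := by exact_mod_cast hq.trans hqp
  have hqp' : (q : ℝ) < p := by exact_mod_cast hqp
  have hq' : (0 : ℝ) < q := by exact_mod_cast hq
  refine ⟨tsum_nonneg fun i => (rho_term_mem_Icc hw i).1, ?_⟩
  calc rho p q w ≤ ∑' i : ℕ, ((p : ℝ) - 1) / q * ((q : ℝ) / p) ^ (i + 1) :=
        (summable_rho hq hqp hw).tsum_le_tsum (fun i => (rho_term_mem_Icc hw i).2)
          (summable_mul_pow_succ hq hqp _)
    _ = ((p : ℝ) - 1) / q * (q / p) * (1 - (q : ℝ) / p)⁻¹ := by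
        simp_rw [pow_succ', ← mul_assoc]
        rw [tsum_mul_left, tsum_geometric_of_lt_one (r := (q : ℝ) / p) (by positivity)
          (by rwa [div_lt_one hp])]
    _ = ((p : ℝ) - 1) / (p - q) := by
        field_simp

/-- The partial sums telescope to `(q/p)^N s N - s 0`. -/
lemma rho_digit_add {s : ℕ → ℕ} (hq : 0 < q) (hqp : q < p) (hs : ∀ k, digit p q s k ∈ Ap p)
    (N : ℕ) : rho p q (digit p q s) + s 0
      = ((q : ℝ) / p) ^ N * (s N + rho p q (digit p q (fun k => s (k + N)))) := by
  have hp : (p : ℝ) ≠ 0 := by exact_mod_cast (hq.trans hqp).ne'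
  have hq' : (q : ℝ) ≠ 0 := by exact_mod_cast hq.ne'
  have hsplit : ∀ i, (digit p q s i : ℝ) / q * ((q : ℝ) / p) ^ (i + 1)
      = s (i + 1) * ((q : ℝ) / p) ^ (i + 1) - s i * ((q : ℝ) / p) ^ i := by
    intro i
    simp only [digit, Int.cast_sub, Int.cast_mul, Int.cast_natCast, pow_succ]
    field_simp
  rw [rho, ← (summable_rho hq hqp hs).sum_add_tsum_nat_add N, Finset.sum_congr rfl
    fun i _ => hsplit i, Finset.sum_range_sub (fun i => s i * ((q : ℝ) / p) ^ i), rho,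
    mul_add, ← tsum_mul_left]
  simp only [digit_shift, pow_zero, mul_one]
  have : ∀ i, (digit p q s (i + N) : ℝ) / q * ((q : ℝ) / p) ^ (i + N + 1)
      = ((q : ℝ) / p) ^ N * ((digit p q s (i + N) : ℝ) / q * ((q : ℝ) / p) ^ (i + 1)) := by
    intro i; ring
  simp only [this]
  ring

lemma rho_digit_add_sub_mem_Icc {s : ℕ → ℕ} (hq : 0 < q) (hqp : q < p)
    (hs : ∀ k, digit p q s k ∈ Ap p) (N : ℕ) : rho p q (digit p q s) + s 0 - ((q : ℝ) / p) ^ N * s N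
      ∈ Set.Icc 0 (((p : ℝ) - 1) / (p - q) * ((q : ℝ) / p) ^ N) := by
  rw [rho_digit_add hq hqp hs N, mul_add, add_sub_cancel_left]
  obtain ⟨h₀, h₁⟩ := rho_mem_Icc hq hqp (w := digit p q (fun k => s (k + N))) fun k => by
    rw [digit_shift]; exact hs (k + N)
  have hr : (0 : ℝ) ≤ ((q : ℝ) / p) ^ N := by positivity
  exact ⟨mul_nonneg hr h₀, by rw [mul_comm]; gcongr⟩

end Evaluation

section Approximation

variable {p q : ℕ}

/-- The state sequences of the branches of `T_{p/q}` from `0` with all digits in `D`. -/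
def dStates (p q : ℕ) : Set (ℕ → ℕ) := {s | s 0 = 0 ∧ ∀ k, digit p q s k ∈ Ap p ∩ Dalph p q}

lemma abs_span_sub_gap_le (hq : 0 < q) (hqp : q < p) {n : ℕ} {wl wu : ℕ → ℤ}
    (hwl : IsBranch p q (LowAlph q) n wl) (hwu : IsBranch p q (UpAlph p q) n wu) (N : ℕ) :
    |rho p q wu - rho p q wl - ((q : ℝ) / p) ^ N * gap p q n N|
      ≤ ((p : ℝ) - 1) / (p - q) * ((q : ℝ) / p) ^ N := by
  obtain rfl := IsBranch.eq_digit_minNext hq hwl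
  obtain rfl := IsBranch.eq_digit_maxNext hq hqp.le hwu
  have h₁ := rho_digit_add_sub_mem_Icc hq hqp
    (fun k => (upAlph_subset hqp.le (IsBranch.mem hwu k)).1) N
  have h₂ := rho_digit_add_sub_mem_Icc hq hqp
    (fun k => lowAlph_subset_ap hqp.le (IsBranch.mem hwl k)) N
  refine le_of_eq_of_le ?_ (abs_sub_le_of_nonneg_of_le h₁.1 h₁.2 h₂.1 h₂.2)
  rw [cast_gap hqp.le, Function.iterate_zero_apply, Function.iterate_zero_apply]
  ring_nf

lemma abs_rho_sub_le (hq : 0 < q) (hqp : q < p) {s : ℕ → ℕ} (hs : s ∈ dStates p q) (N : ℕ) :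
    |rho p q (digit p q s) - ((q : ℝ) / p) ^ N * s N|
      ≤ ((p : ℝ) - 1) / (p - q) * ((q : ℝ) / p) ^ N := by
  have h := rho_digit_add_sub_mem_Icc hq hqp (fun k => (hs.2 k).1) N
  rw [hs.1, Nat.cast_zero, add_zero] at h
  rw [abs_of_nonneg h.1]
  exact h.2

lemma abs_span_sub_rho_le (hq : 0 < q) (hqp : q < p) {n N : ℕ} {wl wu : ℕ → ℤ}
    (hwl : IsBranch p q (LowAlph q) n wl) (hwu : IsBranch p q (UpAlph p q) n wu)
    {s : ℕ → ℕ} (hs : s ∈ dStates p q) (hgap : gap p q n N = s N) :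
    |rho p q wu - rho p q wl - rho p q (digit p q s)|
      ≤ 2 * (((p : ℝ) - 1) / (p - q)) * ((q : ℝ) / p) ^ N := by
  have h₁ := abs_span_sub_gap_le hq hqp hwl hwu N
  have h₂ := abs_rho_sub_le hq hqp hs N
  rw [hgap] at h₁
  rw [abs_sub_comm] at h₂
  linarith [abs_sub_le (rho p q wu - rho p q wl) (((q : ℝ) / p) ^ N * s N) (rho p q (digit p q s))]

end Approximation

lemma mem_closure_of_forall_abs_sub_le {A : Set ℝ} {x c r : ℝ} (hr₀ : 0 ≤ r) (hr₁ : r < 1)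
    (h : ∀ N : ℕ, ∃ y ∈ A, |x - y| ≤ c * r ^ N) : x ∈ closure A := by
  rw [Metric.mem_closure_iff]
  intro ε hε
  have hc := (tendsto_pow_atTop_nhds_zero_of_lt_one hr₀ hr₁).const_mul c
  rw [mul_zero] at hc
  obtain ⟨N, hN⟩ := (hc.eventually (gt_mem_nhds hε)).exists
  obtain ⟨y, hy, hxy⟩ := h N
  exact ⟨y, hy, ((Real.dist_eq x y).trans_le hxy).trans_lt hN⟩

section Topology

variable {p q : ℕ}

lemma lt_pow_of_mem_dStates (hq : 0 < q) {s : ℕ → ℕ} (hs : s ∈ dStates p q) (k : ℕ) :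
    s k < p ^ k := by
  induction k with
  | zero => simp [hs.1]
  | succ k ih =>
    have hd := (hs.2 k).1.2
    have h₁ : (s (k + 1) : ℤ) ≤ q * s (k + 1) :=
      le_mul_of_one_le_left (by positivity) (by exact_mod_cast hq)
    have h₂ : (p : ℤ) * (s k + 1) ≤ p * p ^ k :=
      mul_le_mul_of_nonneg_left (by exact_mod_cast ih) (by positivity)
    have : (s (k + 1) : ℤ) < p ^ (k + 1) := by
      rw [pow_succ']
      simp only [digit] at hd
      linarith
    exact_mod_cast this

lemma continuous_digit (k : ℕ) : Continuous fun s : ℕ → ℕ => digit p q s k := by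
  show Continuous ((fun x : ℕ × ℕ => (q : ℤ) * x.1 - p * x.2) ∘ fun s : ℕ → ℕ => (s (k + 1), s k))
  exact continuous_of_discreteTopology.comp ((continuous_apply _).prodMk (continuous_apply _))

lemma isCompact_dStates (hq : 0 < q) : IsCompact (dStates p q) := by
  have hclosed : IsClosed (dStates p q) := by
    have : dStates p q
        = {s | s 0 = 0} ∩ ⋂ k, (fun s => digit p q s k) ⁻¹' (Ap p ∩ Dalph p q) := by
      ext s
      simp [dStates]
    rw [this]
    exact (isClosed_eq (continuous_apply 0) continuous_const).inter
      (isClosed_iInter fun k => (isClosed_discrete _).preimage (continuous_digit k))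
  exact (isCompact_univ_pi fun k => (Set.finite_Iio (p ^ k)).isCompact).of_isClosed_subset
    hclosed fun s hs => Set.mem_univ_pi.mpr fun k => lt_pow_of_mem_dStates hq hs k

lemma continuousOn_rho_digit (hq : 0 < q) (hqp : q < p) :
    ContinuousOn (fun s => rho p q (digit p q s)) (dStates p q) := by
  refine continuousOn_tsum (fun i => ((continuous_of_discreteTopology
      (f := fun z : ℤ => (z : ℝ) / q * ((q : ℝ) / p) ^ (i + 1))).comp
        (continuous_digit i)).continuousOn)
    (summable_mul_pow_succ hq hqp (((p : ℝ) - 1) / q)) fun i s hs => ?_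
  have h := rho_term_mem_Icc (q := q) (fun k => (hs.2 k).1) i
  rw [Real.norm_of_nonneg h.1]
  exact h.2

lemma target_eq_image :
    {x : ℝ | ∃ w : ℕ → ℤ, IsBranch p q (Ap p) 0 w ∧ (∀ k, w k ∈ Dalph p q) ∧ x = rho p q w}
      = (fun s => rho p q (digit p q s)) '' dStates p q := by
  ext x
  constructor
  · rintro ⟨w, hw, hD, rfl⟩
    obtain ⟨s, hs₀, rfl, hs⟩ := isBranch_iff.mp hw
    exact ⟨s, ⟨hs₀, fun k => ⟨hs k, hD k⟩⟩, rfl⟩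
  · rintro ⟨s, ⟨hs₀, hs⟩, rfl⟩
    exact ⟨digit p q s, isBranch_iff.mpr ⟨s, hs₀, rfl, fun k => (hs k).1⟩, fun k => (hs k).2,
      rfl⟩

lemma isClosed_image_rho_digit (hq : 0 < q) (hqp : q < p) :
    IsClosed ((fun s => rho p q (digit p q s)) '' dStates p q) :=
  ((isCompact_dStates hq).image_of_continuousOn (continuousOn_rho_digit hq hqp)).isClosed

end Topology

section Reachability

variable {p q : ℕ}

inductive Reachable (p q : ℕ) : ℕ → ℕ → Prop
  | zero : Reachable p q 0 0
  | step {N a b : ℕ} : Reachable p q N a → (q : ℤ) * b - p * a ∈ Ap p ∩ Dalph p q →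
      Reachable p q (N + 1) b

lemma reachable_of_mem_dStates {s : ℕ → ℕ} (hs : s ∈ dStates p q) : ∀ N, Reachable p q N (s N)
  | 0 => by rw [hs.1]; exact .zero
  | N + 1 => .step (reachable_of_mem_dStates hs N) (hs.2 N)

lemma Reachable.exists_extend {N m : ℕ} (h : Reachable p q N m) {t : ℕ → ℕ} (ht₀ : t 0 = m)
    (ht : ∀ k, digit p q t k ∈ Ap p ∩ Dalph p q) : ∃ s ∈ dStates p q, ∀ k, s (N + k) = t k := by
  induction h generalizing t with
  | zero => exact ⟨t, ⟨ht₀, ht⟩, fun k => by rw [zero_add]⟩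
  | @step N a b _ hab ih =>
    obtain ⟨s, hs, hst⟩ := ih (t := fun | 0 => a | k + 1 => t k) rfl fun
      | 0 => by simpa [digit, ht₀] using hab
      | k + 1 => ht k
    exact ⟨s, hs, fun k => by rw [Nat.add_right_comm]; exact hst (k + 1)⟩

lemma Reachable.exists_mem_dStates (hq : 0 < q) (hqp : q ≤ p) {N m : ℕ} (h : Reachable p q N m) :
    ∃ s ∈ dStates p q, s N = m :=
  let ⟨s, hs, hst⟩ := h.exists_extend (t := fun k => (maxNext p q)^[k] m) rfl
    fun k => upAlph_subset hqp (digit_maxNext_mem hq hqp m k)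
  ⟨s, hs, hst 0⟩

/-- Step back from `m` to `min (maxNext^[N] 0) ⌊q m / p⌋`. -/
lemma reachable_of_le_maxNext_iterate (hq : 0 < q) (hqp : q ≤ p)
    (hnarrow : (p : ℤ) - 2 * q + 1 ≤ 0) :
    ∀ N m, m ≤ (maxNext p q)^[N] 0 → Reachable p q N m
  | 0, m, hm => by
    obtain rfl : m = 0 := Nat.le_zero.mp hm
    exact .zero
  | N + 1, m, hm => by
    rw [Function.iterate_succ_apply'] at hm
    set M := (maxNext p q)^[N] 0
    set m' := min M (q * m / p)
    refine .step (reachable_of_le_maxNext_iterate hq hqp hnarrow N m' (min_le_left _ _)) ?_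
    have hlow : p * m' ≤ q * m :=
      (Nat.mul_le_mul_left p (min_le_right _ _)).trans (Nat.mul_div_le (q * m) p)
    have hhigh : (q : ℤ) * m ≤ p * m' + p - 1 := by
      obtain h | h : m' = M ∨ m' = q * m / p := min_choice _ _ <;> rw [h]
      · have := (maxNext_spec hq hqp M).2
        have := Nat.mul_le_mul_left q hm
        omega
      · have := Nat.div_add_mod (q * m) p
        have := Nat.mod_lt (q * m) (hq.trans_le hqp)
        omega
    simp only [Ap, Dalph, Set.mem_inter_iff, Set.mem_Icc]
    omega

lemma exists_mem_dStates_apply_eq_gap (hq : 0 < q) (hqp : q ≤ p) (n N : ℕ) :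
    ∃ s ∈ dStates p q, s N = gap p q n N := by
  rcases le_or_gt 0 ((p : ℤ) - 2 * q + 1) with hwide | hnarrow
  · refine ⟨gap p q n, ⟨by simp [gap], fun k => ?_⟩, rfl⟩
    have hD := digit_gap_mem hq hqp n k
    exact ⟨⟨by linarith [hD.1], hD.2⟩, hD⟩
  · exact (reachable_of_le_maxNext_iterate hq hqp hnarrow.le N _
      (gap_le_maxNext_iterate_zero hq hqp n N)).exists_mem_dStates hq hqp

lemma exists_dvd_add_mul {c : ℕ} (hq : 0 < q) (hco : Nat.Coprime c q) (b : ℕ) :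
    ∃ j, q ∣ b + j * c := by
  have : NeZero q := ⟨hq.ne'⟩
  set u := ZMod.unitOfCoprime c hco
  refine ⟨((-(b : ZMod q)) * ↑u⁻¹).val, (ZMod.natCast_eq_zero_iff _ _).mp ?_⟩
  push_cast
  rw [ZMod.natCast_zmod_val, ← ZMod.coe_unitOfCoprime c hco, mul_assoc, Units.inv_mul, mul_one,
    add_neg_cancel]

/-- Every reachable state is a gap: shifting `n` by a multiple of `q ^ N` shifts both branch
states by the same multiple of `p ^ N`, which by coprimality steers the next min-digit. -/
lemma Reachable.exists_gap_eq (hq : 0 < q) (hqp : q ≤ p) (hco : Nat.Coprime p q) {N m : ℕ}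
    (h : Reachable p q N m) : ∃ n, gap p q n N = m := by
  induction h with
  | zero => exact ⟨0, rfl⟩
  | @step N a b _ hab ih =>
    obtain ⟨n, hn⟩ := ih
    set t := (minNext p q)^[N] n
    have hmax : (maxNext p q)^[N] n = t + a := by
      have := minNext_iterate_le_maxNext_iterate hqp N n
      rw [← hn, gap]
      omega
    obtain ⟨⟨hd₀, hd₁⟩, hd₂, -⟩ := hab
    -- with min-digit `e`, the max-digit is `e + (q b - p a) ∈ UpAlph p q`
    set e : ℕ := ((p : ℤ) - q - (q * b - p * a)).toNat
    have he' : (e : ℤ) = max ((p : ℤ) - q - (q * b - p * a)) 0 := Int.toNat_eq_max _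
    obtain ⟨j, c, hc⟩ := exists_dvd_add_mul hq (hco.pow_left (N + 1)) (p * t + e)
    have hc' : (q : ℤ) * c = p * t + e + j * p ^ (N + 1) := by exact_mod_cast hc.symm
    have hmin : minNext p q (t + j * p ^ N) = c :=
      (eq_minNext (d := e) hq (by push_cast; linear_combination hc') ⟨by omega, by omega⟩).symm
    have hmax' : maxNext p q (t + a + j * p ^ N) = c + b :=
      (eq_maxNext (d := e + ((q : ℤ) * b - p * a)) hq hqp (by push_cast; linear_combination hc')
        ⟨by omega, by omega⟩).symm
    refine ⟨n + j * q ^ N, ?_⟩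
    rw [gap, Function.iterate_succ_apply', Function.iterate_succ_apply',
      iterate_add_mul_pow (maxNext_add_mul hq), iterate_add_mul_pow (minNext_add_mul hq), hmax,
      hmin, hmax']
    omega

end Reachability

end RationalBase

open RationalBase

theorem stmt12 (p q : ℕ) (hco : Nat.Coprime p q) (hq : 1 < q) (hpq : q < p)
    (mw mx : ℕ → ℕ → ℤ)
    (hmw : ∀ n, IsBranch p q (LowAlph q) n (mw n))
    (hmx : ∀ n, IsBranch p q (UpAlph p q) n (mx n)) :
    closure {x : ℝ | ∃ n : ℕ, x = rho p q (mx n) - rho p q (mw n)}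
      = {x : ℝ | ∃ w : ℕ → ℤ, IsBranch p q (Ap p) 0 w ∧
          (∀ k, w k ∈ Dalph p q) ∧ x = rho p q w} := by
  have hq₀ : 0 < q := by omega
  have hp : (0 : ℝ) < p := by exact_mod_cast hq₀.trans hpq
  have hr₀ : (0 : ℝ) ≤ q / p := by positivity
  have hr₁ : (q : ℝ) / p < 1 := by rw [div_lt_one hp]; exact_mod_cast hpq
  have hclosed := isClosed_image_rho_digit hq₀ hpq
  rw [target_eq_image]
  apply Set.Subset.antisymm
  · refine closure_minimal ?_ hclosed
    rintro _ ⟨n, rfl⟩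
    rw [← hclosed.closure_eq]
    refine mem_closure_of_forall_abs_sub_le (c := 2 * (((p : ℝ) - 1) / (p - q))) hr₀ hr₁
      fun N => ?_
    obtain ⟨s, hs, hsN⟩ := exists_mem_dStates_apply_eq_gap hq₀ hpq.le n N
    exact ⟨_, ⟨s, hs, rfl⟩, abs_span_sub_rho_le hq₀ hpq (hmw n) (hmx n) hs hsN.symm⟩
  · rintro _ ⟨s, hs, rfl⟩
    refine mem_closure_of_forall_abs_sub_le (c := 2 * (((p : ℝ) - 1) / (p - q))) hr₀ hr₁
      fun N => ?_
    obtain ⟨n, hn⟩ := (reachable_of_mem_dStates hs N).exists_gap_eq hq₀ hpq.le hco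
    refine ⟨_, ⟨n, rfl⟩, ?_⟩
    rw [abs_sub_comm]
    exact abs_span_sub_rho_le hq₀ hpq (hmw n) (hmx n) hs hn
end

section
/- Let p and q be coprime integers with p > q > 1 and p ≤ 2q−1. Then {ρ(w) : w labels a branch of T_{p/q} from 0} = {ρ(w) : w labels a branch of S_{p/q} from 0}. -/
/-! A branch of `T_{p/q}` is a sequence of states with `⌊q t_{k+1} / p⌋ = t_k`, and any branch
from `0` with states `s` evaluates to `lim s_N (q/p)^N`. For a branch of `S_{p/q}` the digits are
at most `p - 1`, so `⌊q s_{k+1} / p⌋ ≤ s_k`: for fixed `k`, the `T`-ancestors at level `k` of the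
states `s_{k+j}` decrease with `j` and stabilise at some `t_k`. These `t_k` form a branch of
`T_{p/q}` from `0` squeezed between `(q/p)^j s_{k+j} - p/(p-q)` and `s_k`, hence with the same
value. -/

open Filter Topology Finset

lemma IsBranch.mono {p q n : ℕ} {E F : Set ℤ} {w : ℕ → ℤ} (hEF : E ⊆ F)
    (hw : IsBranch p q E n w) : IsBranch p q F n w := by
  obtain ⟨s, hs0, hs⟩ := hw
  exact ⟨s, hs0, fun k => ⟨(hs k).1, hEF (hs k).2⟩⟩

lemma Ap_subset_Dalph {p q : ℕ} (h : p ≤ 2 * q - 1) : Ap p ⊆ Dalph p q :=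
  fun _ ⟨h0, h1⟩ => ⟨by omega, h1⟩

namespace RationalBase

variable {p q : ℕ}

/-- In `T_{p/q}` the children of `n` are exactly the states `m` with `⌊q m / p⌋ = n`. -/
def parent (p q m : ℕ) : ℕ := q * m / p

lemma parent_mono : Monotone (parent p q) := fun _ _ h =>
  Nat.div_le_div_right (Nat.mul_le_mul_left q h)

lemma parent_le_of_step {m n : ℕ} {d : ℤ} (hd : d ≤ p - 1) (h : (q : ℤ) * m = p * n + d) :
    parent p q m ≤ n := by
  rcases Nat.eq_zero_or_pos p with rfl | hp
  · simp [parent]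
  refine Nat.lt_succ_iff.mp ((Nat.div_lt_iff_lt_mul hp).mpr ?_)
  zify
  linarith

lemma sub_mem_Ap_of_parent_eq (hp : 0 < p) {m n : ℕ} (h : parent p q m = n) :
    (q * m - p * n : ℤ) ∈ Ap p := by
  subst h
  have h1 := Nat.div_mul_le_self (q * m) p
  have h2 := Nat.lt_mul_div_succ (q * m) hp
  unfold parent
  generalize q * m / p = d at h1 h2
  constructor <;> nlinarith

lemma sub_le_parent_iterate (hqp : q < p) (m j : ℕ) :
    (m : ℝ) * ((q : ℝ) / p) ^ j - p / (p - q) ≤ (parent p q)^[j] m := by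
  have hp : (0 : ℝ) < p := by exact_mod_cast (by omega : 0 < p)
  have hpq : (0 : ℝ) < p - q := sub_pos.mpr (by exact_mod_cast hqp)
  induction j with
  | zero =>
    simp only [pow_zero, mul_one, Function.iterate_zero_apply]
    exact sub_le_self _ (div_pos hp hpq).le
  | succ j ih =>
    set n := (parent p q)^[j] m
    have hn : (q : ℝ) * n < p * (parent p q n + 1) := by
      exact_mod_cast Nat.lt_mul_div_succ (q * n) (by omega : 0 < p)
    rw [Function.iterate_succ_apply']
    have key : (q : ℝ) / p * n - 1 ≤ parent p q n := by
      rw [div_mul_eq_mul_div, div_sub_one hp.ne', div_le_iff₀ hp]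
      linarith
    calc (m : ℝ) * ((q : ℝ) / p) ^ (j + 1) - p / (p - q)
        = (q : ℝ) / p * ((m : ℝ) * ((q : ℝ) / p) ^ j - p / (p - q)) - 1 := by
          have hC : (p : ℝ) / (p - q) = q / p * (p / (p - q)) + 1 := by
            field_simp
            ring
          rw [pow_succ]
          linear_combination -hC
      _ ≤ (q : ℝ) / p * n - 1 := by gcongr
      _ ≤ parent p q n := key

lemma sum_range_rho_terms (hq : 0 < q) (hp : 0 < p) {w : ℕ → ℤ} {s : ℕ → ℕ}
    (hs : ∀ k, (q : ℤ) * s (k + 1) = p * s k + w k) (N : ℕ) :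
    ∑ i ∈ range N, (w i : ℝ) / q * ((q : ℝ) / p) ^ (i + 1)
      = (s N : ℝ) * ((q : ℝ) / p) ^ N - s 0 := by
  induction N with
  | zero => simp
  | succ N ih =>
    have hN : (w N : ℝ) = q * s (N + 1) - p * s N := by
      have : (q : ℝ) * s (N + 1) = p * s N + w N := by exact_mod_cast hs N
      linarith
    have hp' : (p : ℝ) ≠ 0 := by positivity
    rw [sum_range_succ, ih, hN, div_pow, div_pow]
    field_simp
    ring

lemma summable_rho_terms (hq : 0 < q) (hqp : q < p) {a b : ℤ} {w : ℕ → ℤ}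
    (hw : ∀ k, w k ∈ Set.Icc a b) :
    Summable fun i => (w i : ℝ) / q * ((q : ℝ) / p) ^ (i + 1) := by
  have hr : (q : ℝ) / p < 1 :=
    (div_lt_one (by exact_mod_cast hq.trans hqp)).mpr (by exact_mod_cast hqp)
  refine Summable.of_norm_bounded (g := fun i => (|a| + |b| : ℝ) / q * ((q : ℝ) / p) ^ (i + 1))
    (((summable_nat_add_iff 1).mpr (summable_geometric_of_lt_one (by positivity) hr)).mul_left _)
    fun i => ?_
  have hwi : |(w i : ℝ)| ≤ |a| + |b| := by
    have : |w i| ≤ |a| + |b| := abs_le.mpr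
      ⟨by linarith [neg_abs_le a, abs_nonneg b, (hw i).1],
        by linarith [le_abs_self b, abs_nonneg a, (hw i).2]⟩
    exact_mod_cast this
  rw [Real.norm_eq_abs, abs_mul, abs_div, abs_pow, abs_div]
  simp only [Nat.abs_cast]
  gcongr

lemma tendsto_rho (hq : 0 < q) (hqp : q < p) {a b : ℤ} {w : ℕ → ℤ} {s : ℕ → ℕ}
    (hs : ∀ k, (q : ℤ) * s (k + 1) = p * s k + w k ∧ w k ∈ Set.Icc a b) :
    Tendsto (fun N => (s N : ℝ) * ((q : ℝ) / p) ^ N) atTop (𝓝 (s 0 + rho p q w)) := by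
  have h := (summable_rho_terms hq hqp fun k => (hs k).2).hasSum.tendsto_sum_nat.const_add
    (s 0 : ℝ)
  simp only [sum_range_rho_terms hq (hq.trans hqp) fun k => (hs k).1, add_sub_cancel] at h
  exact h

section Descent

variable (p q) (s : ℕ → ℕ)

def ancestor (k j : ℕ) : ℕ := (parent p q)^[j] (s (k + j))

noncomputable def limitAncestor (k : ℕ) : ℕ := ⨅ j, ancestor p q s k j

variable {p q s}

lemma limitAncestor_le (k : ℕ) : limitAncestor p q s k ≤ s k :=
  ciInf_le (OrderBot.bddBelow _) 0

variable (hs : ∀ k, parent p q (s (k + 1)) ≤ s k)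
include hs

lemma antitone_ancestor (k : ℕ) : Antitone (ancestor p q s k) := by
  refine antitone_nat_of_succ_le fun j => ?_
  rw [ancestor, ancestor, Function.iterate_succ_apply, ← add_assoc]
  exact parent_mono.iterate j (hs _)

lemma eventually_ancestor_eq (k : ℕ) :
    ∀ᶠ j in atTop, ancestor p q s k j = limitAncestor p q s k := by
  obtain ⟨j₀, hj₀⟩ := ciInf_mem (ancestor p q s k)
  filter_upwards [eventually_ge_atTop j₀] with j hj
  refine le_antisymm ?_ (ciInf_le (OrderBot.bddBelow _) j)
  calc ancestor p q s k j ≤ ancestor p q s k j₀ := antitone_ancestor hs k hj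
    _ = limitAncestor p q s k := hj₀

lemma parent_limitAncestor_succ (k : ℕ) :
    parent p q (limitAncestor p q s (k + 1)) = limitAncestor p q s k := by
  obtain ⟨j, hj, hj'⟩ := ((eventually_ancestor_eq hs (k + 1)).and
    ((tendsto_add_atTop_nat 1).eventually (eventually_ancestor_eq hs k))).exists
  rw [← hj, ← hj', ancestor, ancestor, Function.iterate_succ_apply', add_right_comm, add_assoc]

lemma tendsto_limitAncestor (hqp : q < p) {x : ℝ}
    (hx : Tendsto (fun N => (s N : ℝ) * ((q : ℝ) / p) ^ N) atTop (𝓝 x)) :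
    Tendsto (fun k => (limitAncestor p q s k : ℝ) * ((q : ℝ) / p) ^ k) atTop (𝓝 x) := by
  have hr0 : (0 : ℝ) ≤ q / p := by positivity
  have hr1 : (q : ℝ) / p < 1 :=
    (div_lt_one (by exact_mod_cast (by omega : 0 < p))).mpr (by exact_mod_cast hqp)
  have lower : ∀ k, x - p / (p - q) * ((q : ℝ) / p) ^ k
      ≤ (limitAncestor p q s k : ℝ) * ((q : ℝ) / p) ^ k := by
    intro k
    refine le_of_tendsto ((hx.comp (tendsto_add_atTop_nat k)).sub_const _) ?_
    filter_upwards [eventually_ancestor_eq hs k] with j hj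
    have hanc := sub_le_parent_iterate hqp (s (k + j)) j
    rw [← ancestor, hj] at hanc
    calc (s (j + k) : ℝ) * ((q : ℝ) / p) ^ (j + k) - p / (p - q) * ((q : ℝ) / p) ^ k
        = ((s (k + j) : ℝ) * ((q : ℝ) / p) ^ j - p / (p - q)) * ((q : ℝ) / p) ^ k := by
          rw [add_comm j k, pow_add]
          ring
      _ ≤ _ := by gcongr
  have upper :
      ∀ k, (limitAncestor p q s k : ℝ) * ((q : ℝ) / p) ^ k ≤ s k * ((q : ℝ) / p) ^ k :=
    fun k => by gcongr; exact_mod_cast limitAncestor_le k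
  have hlow : Tendsto (fun k => x - p / (p - q) * ((q : ℝ) / p) ^ k) atTop (𝓝 x) := by
    simpa using
      ((tendsto_pow_atTop_nhds_zero_of_lt_one hr0 hr1).const_mul (p / (p - q) : ℝ)).const_sub x
  exact tendsto_of_tendsto_of_tendsto_of_le_of_le hlow hx lower upper

end Descent

theorem exists_isBranch_Ap_rho_eq (hq : 0 < q) (hqp : q < p) {a : ℤ} {w : ℕ → ℤ}
    (hw : IsBranch p q (Set.Icc a (p - 1)) 0 w) :
    ∃ w' : ℕ → ℤ, IsBranch p q (Ap p) 0 w' ∧ rho p q w' = rho p q w := by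
  obtain ⟨s, hs0, hs⟩ := hw
  have hpar : ∀ k, parent p q (s (k + 1)) ≤ s k :=
    fun k => parent_le_of_step (hs k).2.2 (hs k).1
  set t := limitAncestor p q s
  have ht0 : t 0 = 0 := Nat.le_zero.mp ((limitAncestor_le 0).trans hs0.le)
  set w' : ℕ → ℤ := fun k => q * t (k + 1) - p * t k
  have ht : ∀ k, (q : ℤ) * t (k + 1) = p * t k + w' k ∧ w' k ∈ Ap p := fun k =>
    ⟨by ring, sub_mem_Ap_of_parent_eq (hq.trans hqp) (parent_limitAncestor_succ hpar k)⟩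
  refine ⟨w', ⟨t, ht0, ht⟩, ?_⟩
  have hsx := tendsto_rho hq hqp hs
  have htx := tendsto_rho hq hqp ht
  rw [hs0, Nat.cast_zero, zero_add] at hsx
  rw [ht0, Nat.cast_zero, zero_add] at htx
  exact tendsto_nhds_unique htx (tendsto_limitAncestor hpar hqp hsx)

end RationalBase

theorem stmt13_general (p q : ℕ) (hpq : q < p) (hsmall : p ≤ 2 * q - 1) :
    {x : ℝ | ∃ w : ℕ → ℤ, IsBranch p q (Ap p) 0 w ∧ x = rho p q w}
      = {x : ℝ | ∃ w : ℕ → ℤ, IsBranch p q (Dalph p q) 0 w ∧ x = rho p q w} := by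
  ext x
  constructor
  · rintro ⟨w, hw, rfl⟩
    exact ⟨w, hw.mono (Ap_subset_Dalph hsmall), rfl⟩
  · rintro ⟨w, hw, rfl⟩
    obtain ⟨w', hw', h⟩ := RationalBase.exists_isBranch_Ap_rho_eq (by omega) hpq hw
    exact ⟨w', hw', h.symm⟩

theorem stmt13 (p q : ℕ) (hco : Nat.Coprime p q) (hq : 1 < q) (hpq : q < p)
    (hsmall : p ≤ 2 * q - 1) :
    {x : ℝ | ∃ w : ℕ → ℤ, IsBranch p q (Ap p) 0 w ∧ x = rho p q w}
      = {x : ℝ | ∃ w : ℕ → ℤ, IsBranch p q (Dalph p q) 0 w ∧ x = rho p q w} :=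
  stmt13_general p q hpq hsmall
end

section
/- Let p and q be coprime integers with p > q > 1 and p ≤ 2q−1. For every finite word u over D = {p−2q+1, …, p−1} that labels a path from 0 to some m ∈ ℕ in the automaton S_{p/q}, there exists a finite word v over A_p = {0,…,p−1} of the same length as u that labels a path from 0 to the same state m in the tree T_{p/q}. -/
def Mseq (p q : ℕ) : ℕ → ℕ
  | 0 => 0
  | k + 1 => (p * Mseq p q k + (p - 1)) / q

lemma reach (p q : ℕ) (hq : 1 < q) (hpq : q < p) :
    ∀ ℓ m : ℕ, m ≤ Mseq p q ℓ → ∃ v : ℕ → ℤ, IsPath p q (Ap p) 0 m ℓ v := by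
  have hp0 : 0 < p := by omega
  intro ℓ
  induction ℓ with
  | zero =>
    intro m hm
    obtain rfl : m = 0 := by simpa [Mseq] using hm
    exact ⟨0, fun _ => 0, rfl, rfl, fun k hk => absurd hk (Nat.not_lt_zero k)⟩
  | succ ℓ ih =>
    intro m hm
    set n := q * m / p with hn
    have hqm : q * m ≤ p * Mseq p q ℓ + (p - 1) := by
      calc q * m ≤ q * Mseq p q (ℓ + 1) := Nat.mul_le_mul_left q hm
        _ ≤ p * Mseq p q ℓ + (p - 1) := Nat.mul_div_le _ q
    have hnle : n ≤ Mseq p q ℓ := by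
      have h1 : n ≤ (p * Mseq p q ℓ + (p - 1)) / p := Nat.div_le_div_right hqm
      have h2 : (p * Mseq p q ℓ + (p - 1)) / p = Mseq p q ℓ + (p - 1) / p := by
        rw [Nat.mul_add_div hp0]
      have h3 : (p - 1) / p = 0 := Nat.div_eq_of_lt (by omega)
      omega
    obtain ⟨v, s, hs0, hsl, hstep⟩ := ih n hnle
    have hdm : p * n + q * m % p = q * m := Nat.div_add_mod (q * m) p
    have hmod : q * m % p < p := Nat.mod_lt _ hp0
    refine ⟨fun k => if k = ℓ then ((q * m % p : ℕ) : ℤ) else v k,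
      fun k => if k = ℓ + 1 then m else s k, by simp [hs0], by simp, ?_⟩
    intro k hk
    rcases Nat.lt_succ_iff_lt_or_eq.mp hk with h | h
    · have h1 : k ≠ ℓ := Nat.ne_of_lt h
      have h2 : k + 1 ≠ ℓ + 1 := by omega
      have h3 : k ≠ ℓ + 1 := by omega
      simp only [h1, h2, h3, if_false]
      exact hstep k h
    · subst h
      have h3 : k ≠ k + 1 := by omega
      simp only [eq_self_iff_true, if_true, if_neg h3, hsl]
      refine ⟨?_, Int.natCast_nonneg _, ?_⟩
      · exact_mod_cast hdm.symm
      · have : ((q * m % p : ℕ) : ℤ) < p := by exact_mod_cast hmod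
        omega

lemma bound (p q : ℕ) (hq : 1 < q) (hpq : q < p) :
    ∀ (ℓ m : ℕ) (u : ℕ → ℤ), IsPath p q (Dalph p q) 0 m ℓ u → m ≤ Mseq p q ℓ := by
  have hp1 : ((p - 1 : ℕ) : ℤ) = (p : ℤ) - 1 := by omega
  intro ℓ m u ⟨s, hs0, hsl, hstep⟩
  have key : ∀ k, k ≤ ℓ → s k ≤ Mseq p q k := by
    intro k
    induction k with
    | zero => intro _; simp [hs0, Mseq]
    | succ k ih =>
      intro hk
      have hk' : k < ℓ := by omega
      obtain ⟨heq, hmem, hub⟩ := hstep k hk'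
      have h1 : (q : ℤ) * s (k + 1) ≤ p * s k + ((p : ℤ) - 1) := by
        rw [heq]; linarith
      have h2 : q * s (k + 1) ≤ p * s k + (p - 1) := by
        have h1' : ((q * s (k + 1) : ℕ) : ℤ) ≤ ((p * s k + (p - 1) : ℕ) : ℤ) := by
          rw [Nat.cast_mul, Nat.cast_add, Nat.cast_mul, hp1]; exact h1
        exact_mod_cast h1'
      have h3 : s (k + 1) ≤ (p * s k + (p - 1)) / q := by
        rw [Nat.le_div_iff_mul_le (by omega : 0 < q), Nat.mul_comm]; exact h2
      calc s (k + 1) ≤ (p * s k + (p - 1)) / q := h3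
        _ ≤ (p * Mseq p q k + (p - 1)) / q :=
            Nat.div_le_div_right (Nat.add_le_add_right (Nat.mul_le_mul_left p (ih (by omega))) _)
        _ = Mseq p q (k + 1) := rfl
  have := key ℓ le_rfl
  omega


theorem stmt14 (p q : ℕ) (hco : Nat.Coprime p q) (hq : 1 < q) (hpq : q < p)
    (hsmall : p ≤ 2 * q - 1) :
    ∀ (ℓ m : ℕ) (u : ℕ → ℤ), IsPath p q (Dalph p q) 0 m ℓ u →
      ∃ v : ℕ → ℤ, (∀ k < ℓ, v k ∈ Ap p) ∧ IsPath p q (Ap p) 0 m ℓ v := by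
  intro ℓ m u hu
  obtain ⟨v, hv⟩ := reach p q hq hpq ℓ m (bound p q hq hpq ℓ m u hu)
  refine ⟨v, ?_, hv⟩
  obtain ⟨s, _, _, hstep⟩ := hv
  exact fun k hk => (hstep k hk).2
end

section
/- Let p and q be coprime integers with p > q > 1 and p > 2q−1. Set ω = ρ(maxword(0)) and γ = ρ(q·minword(1)), where q·minword(1) is the ω-word with first digit q followed by the digits of minword(1). Then for every n ∈ ℕ it holds 0 < γ ≤ span(n) ≤ ω. -/
/-!
Along a branch from state `s 0` with digits `w`, the recurrence `q·s(k+1) = p·s k + w k`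
telescopes to `Σ_{k<N} (w_k/q)(q/p)^(k+1) = s N·(q/p)^N − s 0`, so `ρ(w) + s 0` is the limit
of `s N·(q/p)^N`. Two integer state sequences with a common start whose digits satisfy
`w k < w' k + q` stay ordered, `s k ≤ s' k`, since `q·(s' − s)(k+1) > p·(s' − s) k − q`;
hence `ρ(w) ≤ ρ(w')`. The span is `ρ` of the digit difference `maxword(n) − minword(n)`, whose
digits lie in `[1, p − 1]` because `p ≥ 2q`, so it is squeezed between `q·minword(1)` and
`maxword(0)`.
-/

open Filter Finset Topology

def IsStateSeq (p q : ℕ) (s w : ℕ → ℤ) : Prop :=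
  ∀ k, (q : ℤ) * s (k + 1) = p * s k + w k

variable {p q : ℕ}

theorem IsBranch.mem {E : Set ℤ} {n : ℕ} {w : ℕ → ℤ} (h : IsBranch p q E n w) (k : ℕ) :
    w k ∈ E :=
  let ⟨_, _, hs⟩ := h; (hs k).2

theorem IsBranch.exists_isStateSeq {E : Set ℤ} {n : ℕ} {w : ℕ → ℤ}
    (h : IsBranch p q E n w) : ∃ s : ℕ → ℤ, s 0 = n ∧ IsStateSeq p q s w :=
  let ⟨s, hs0, hs⟩ := h; ⟨fun k => s k, by simp [hs0], fun k => (hs k).1⟩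

namespace IsStateSeq

variable {s s' w w' : ℕ → ℤ}

theorem sub (hs : IsStateSeq p q s w) (hs' : IsStateSeq p q s' w') :
    IsStateSeq p q (s - s') (w - w') := fun k => by
  simp only [Pi.sub_apply]
  linear_combination hs k - hs' k

theorem cons (hs : IsStateSeq p q s w) {n x : ℤ} (h : (q : ℤ) * s 0 = p * n + x) :
    IsStateSeq p q (fun k => if k = 0 then n else s (k - 1))
      (fun k => if k = 0 then x else w (k - 1)) := by
  rintro (_ | k)
  · simpa using h
  · simpa using hs k

theorem sum_range_eq (hq : q ≠ 0) (hp : p ≠ 0) (hs : IsStateSeq p q s w) (N : ℕ) :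
    ∑ k ∈ range N, ((w k : ℝ) / q) * ((q : ℝ) / p) ^ (k + 1)
      = s N * ((q : ℝ) / p) ^ N - s 0 := by
  induction N with
  | zero => simp
  | succ N ih =>
    have hq' : (q : ℝ) ≠ 0 := by exact_mod_cast hq
    have hr : (p : ℝ) / q * (q / p) = 1 := by field_simp
    have hw : (w N : ℝ) / q = s (N + 1) - p / q * s N := by
      have : (q : ℝ) * s (N + 1) = p * s N + w N := by exact_mod_cast hs N
      field_simp
      linarith
    rw [sum_range_succ, ih, hw]
    linear_combination (-(s N : ℝ) * ((q : ℝ) / p) ^ N) * hr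

theorem le_of_digit_lt_add (hq : 0 < q) (hs : IsStateSeq p q s w) (hs' : IsStateSeq p q s' w')
    (h0 : s 0 ≤ s' 0) (hw : ∀ k, w k < w' k + q) (k : ℕ) : s k ≤ s' k := by
  induction k with
  | zero => exact h0
  | succ k ih =>
    have hstep : -(q : ℤ) < q * (s' (k + 1) - s (k + 1)) := by
      have : (0 : ℤ) ≤ p * (s' k - s k) := mul_nonneg (by positivity) (by omega)
      linarith [hs k, hs' k, hw k]
    by_contra! hlt
    have : (q : ℤ) * (s' (k + 1) - s (k + 1)) ≤ q * (-1) :=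
      mul_le_mul_of_nonneg_left (by omega) (by positivity)
    omega

end IsStateSeq

theorem summable_rho_of_mem_Icc (hpq : q < p) {w : ℕ → ℤ} {a b : ℤ}
    (hw : ∀ k, w k ∈ Set.Icc a b) :
    Summable fun i => ((w i : ℝ) / q) * ((q : ℝ) / p) ^ (i + 1) := by
  set r : ℝ := q / p
  have hr0 : 0 ≤ r := by positivity
  have hp : (0 : ℝ) < p := by exact_mod_cast (by omega : 0 < p)
  have hr1 : r < 1 := (div_lt_one hp).2 (by exact_mod_cast hpq)
  set C : ℝ := max |(a : ℝ)| |(b : ℝ)|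
  refine Summable.of_norm_bounded ((summable_geometric_of_lt_one hr0 hr1).mul_left (C / q * r))
    fun i => ?_
  have hwi : |(w i : ℝ)| ≤ C :=
    abs_le_max_abs_abs (by exact_mod_cast (hw i).1) (by exact_mod_cast (hw i).2)
  rw [Real.norm_eq_abs, abs_mul, abs_div, abs_pow, abs_of_nonneg hr0, Nat.abs_cast, pow_succ',
    ← mul_assoc]
  gcongr

theorem rho_sub {w w' : ℕ → ℤ}
    (hw : Summable fun i => ((w i : ℝ) / q) * ((q : ℝ) / p) ^ (i + 1))
    (hw' : Summable fun i => ((w' i : ℝ) / q) * ((q : ℝ) / p) ^ (i + 1)) :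
    rho p q (w - w') = rho p q w - rho p q w' := by
  rw [rho, rho, rho, ← hw.tsum_sub hw']
  congr 1 with i
  push_cast [Pi.sub_apply]
  ring

theorem IsStateSeq.tendsto_mul_pow (hq : 0 < q) (hpq : q < p) {s w : ℕ → ℤ} {a b : ℤ}
    (hs : IsStateSeq p q s w) (hw : ∀ k, w k ∈ Set.Icc a b) :
    Tendsto (fun N => (s N : ℝ) * ((q : ℝ) / p) ^ N) atTop (𝓝 (rho p q w + s 0)) := by
  refine ((summable_rho_of_mem_Icc hpq hw).hasSum.tendsto_sum_nat.add_const (s 0 : ℝ)).congr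
    fun N => ?_
  rw [hs.sum_range_eq hq.ne' (by omega), sub_add_cancel]

theorem rho_le_rho_of_isStateSeq (hq : 0 < q) (hpq : q < p) {s s' w w' : ℕ → ℤ}
    {a b a' b' : ℤ}
    (hs : IsStateSeq p q s w) (hs' : IsStateSeq p q s' w') (h0 : s 0 = s' 0)
    (hwab : ∀ k, w k ∈ Set.Icc a b) (hwab' : ∀ k, w' k ∈ Set.Icc a' b')
    (hw : ∀ k, w k < w' k + q) : rho p q w ≤ rho p q w' := by
  have hle := le_of_tendsto_of_tendsto' (hs.tendsto_mul_pow hq hpq hwab)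
    (hs'.tendsto_mul_pow hq hpq hwab') fun N => by
      gcongr
      exact_mod_cast hs.le_of_digit_lt_add hq hs' h0.le hw N
  rwa [h0, add_le_add_iff_right] at hle

theorem rho_pos (hq : 0 < q) (hpq : q < p) {w : ℕ → ℤ} {b : ℤ}
    (hw : ∀ k, w k ∈ Set.Icc 0 b) (h0 : 0 < w 0) : 0 < rho p q w := by
  refine (summable_rho_of_mem_Icc hpq hw).tsum_pos (fun i => ?_) 0 ?_
  · have : (0 : ℝ) ≤ w i := by exact_mod_cast (hw i).1
    positivity
  · have : (0 : ℝ) < w 0 := by exact_mod_cast h0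
    have : (0 : ℝ) < q := by exact_mod_cast hq
    have : (0 : ℝ) < p := by exact_mod_cast hq.trans hpq
    positivity

theorem stmt15_general (p q : ℕ) (hq : 1 < q) (hpq : q < p)
    (hbig : 2 * q - 1 < p)
    (mw mx : ℕ → ℕ → ℤ)
    (hmw : ∀ n, IsBranch p q (LowAlph q) n (mw n))
    (hmx : ∀ n, IsBranch p q (UpAlph p q) n (mx n)) :
    ∀ n : ℕ,
      0 < rho p q (fun k => if k = 0 then (q : ℤ) else mw 1 (k - 1)) ∧
      rho p q (fun k => if k = 0 then (q : ℤ) else mw 1 (k - 1))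
        ≤ rho p q (mx n) - rho p q (mw n) ∧
      rho p q (mx n) - rho p q (mw n) ≤ rho p q (mx 0) := by
  intro n
  have hq0 : 0 < q := by omega
  have low k (m : ℕ) : mw m k ∈ Set.Icc 0 ((q : ℤ) - 1) := (hmw m).mem k
  have up k (m : ℕ) : mx m k ∈ Set.Icc ((p : ℤ) - q) (p - 1) := (hmx m).mem k
  obtain ⟨a, ha0, ha⟩ := (hmw n).exists_isStateSeq
  obtain ⟨b, hb0, hb⟩ := (hmx n).exists_isStateSeq
  obtain ⟨c, hc0, hc⟩ := (hmw 1).exists_isStateSeq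
  obtain ⟨e, he0, he⟩ := (hmx 0).exists_isStateSeq
  have hspan : rho p q (mx n) - rho p q (mw n) = rho p q (mx n - mw n) :=
    (rho_sub (summable_rho_of_mem_Icc hpq (up · n)) (summable_rho_of_mem_Icc hpq (low · n))).symm
  have hdiff k : (mx n - mw n) k ∈ Set.Icc 1 ((p : ℤ) - 1) := by
    have := low k n; have := up k n
    simp only [Set.mem_Icc, Pi.sub_apply] at *
    omega
  have hγ : IsStateSeq p q _ _ := hc.cons (n := 0) (x := q) (by simp [hc0])
  have hγdig k : (if k = 0 then (q : ℤ) else mw 1 (k - 1)) ∈ Set.Icc 0 (q : ℤ) := by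
    split_ifs
    · simp
    · have := low (k - 1) 1
      exact ⟨this.1, by linarith [this.2]⟩
  refine ⟨rho_pos hq0 hpq hγdig (by simpa using hq0), ?_, ?_⟩ <;> rw [hspan]
  · refine rho_le_rho_of_isStateSeq hq0 hpq hγ (hb.sub ha) (by simp [ha0, hb0]) hγdig hdiff
      fun k => ?_
    have := hγdig k; have := hdiff k
    simp only [Set.mem_Icc] at *
    omega
  · refine rho_le_rho_of_isStateSeq hq0 hpq (hb.sub ha) he (by simp [ha0, hb0, he0]) hdiff
      (up · 0) fun k => ?_
    have := hdiff k; have := up k 0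
    simp only [Set.mem_Icc] at *
    omega

theorem stmt15 (p q : ℕ) (hco : Nat.Coprime p q) (hq : 1 < q) (hpq : q < p)
    (hbig : 2 * q - 1 < p)
    (mw mx : ℕ → ℕ → ℤ)
    (hmw : ∀ n, IsBranch p q (LowAlph q) n (mw n))
    (hmx : ∀ n, IsBranch p q (UpAlph p q) n (mx n)) :
    ∀ n : ℕ,
      0 < rho p q (fun k => if k = 0 then (q : ℤ) else mw 1 (k - 1)) ∧
      rho p q (fun k => if k = 0 then (q : ℤ) else mw 1 (k - 1))
        ≤ rho p q (mx n) - rho p q (mw n) ∧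
      rho p q (mx n) - rho p q (mw n) ≤ rho p q (mx 0) :=
  stmt15_general p q hq hpq hbig mw mx hmw hmx
end

section
/- Let p and q be coprime integers with p > q > 1. For every finite word u = u_1⋯u_ℓ with all letters in {0,…,q−1}, there exists n ∈ ℕ such that u is a prefix of minword(n); equivalently, the set {minword(n) : n ∈ ℕ} is dense in {0,…,q−1}^ω for the product topology. -/
lemma path_exists (p q : ℕ) (hco : Nat.Coprime p q) (hq : 1 < q) :
    ∀ ℓ (u : ℕ → ℤ), (∀ k < ℓ, u k ∈ LowAlph q) →
      ∃ n m : ℕ, IsPath p q (LowAlph q) n m ℓ u := by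
  intro ℓ
  induction ℓ with
  | zero =>
    intro u _
    exact ⟨0, 0, fun _ => 0, rfl, rfl, fun k hk => absurd hk (by omega)⟩
  | succ ℓ ih =>
    intro u hu
    obtain ⟨n, m, s, hs0, hsl, hstep⟩ := ih u (fun k hk => hu k (by omega))
    have hd := hu ℓ (by omega)
    rw [LowAlph, Set.mem_Icc] at hd
    obtain ⟨hd0, hd1⟩ := hd
    have hq0 : (0:ℤ) < q := by exact_mod_cast Nat.lt_of_lt_of_le Nat.zero_lt_one hq.le
    have hcop : IsCoprime ((p : ℤ) ^ (ℓ + 1)) (q : ℤ) :=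
      (Int.isCoprime_iff_gcd_eq_one.mpr (by exact_mod_cast hco)).pow_left
    obtain ⟨a, b, hab⟩ := hcop
    set X : ℤ := (p : ℤ) * m + u ℓ with hX
    set t : ℕ := ((a * (-X)) % q).toNat with ht
    have htt : (t : ℤ) = (a * (-X)) % q :=
      Int.toNat_of_nonneg (Int.emod_nonneg _ (by omega))
    have hdvd : (q : ℤ) ∣ X + (p : ℤ) ^ (ℓ + 1) * t := by
      have h1 : (a * (-X)) % q = a * (-X) - q * (a * (-X) / q) := by
        rw [Int.emod_def]
      have h3 : X + (p : ℤ) ^ (ℓ + 1) * t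
          = X * (1 - a * (p:ℤ)^(ℓ+1)) - (p:ℤ)^(ℓ+1) * ((q:ℤ) * (a * (-X) / q)) := by
        rw [htt, h1]; ring
      have h2 : 1 - a * (p:ℤ)^(ℓ+1) = b * q := by linarith
      rw [h3, h2]
      exact dvd_sub ⟨X * b, by ring⟩ ⟨(p:ℤ)^(ℓ+1) * (a * (-X) / q), by ring⟩
    set Xt : ℤ := X + (p:ℤ)^(ℓ+1) * t with hXt
    have hX0 : 0 ≤ X := add_nonneg (by positivity) hd0
    have hXt0 : 0 ≤ Xt := add_nonneg hX0 (by positivity)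
    set w : ℕ := (Xt / q).toNat with hw
    have hqw : (q:ℤ) * w = Xt := by
      have hnn : 0 ≤ Xt / q := Int.ediv_nonneg hXt0 hq0.le
      rw [hw, Int.toNat_of_nonneg hnn, mul_comm]
      exact Int.ediv_mul_cancel hdvd
    refine ⟨n + q^ℓ * t, w,
      fun k => if k ≤ ℓ then s k + p^k * q^(ℓ - k) * t else w, ?_, ?_, ?_⟩
    · simp [hs0]
    · simp
    · intro k hk
      refine ⟨?_, hu k hk⟩
      by_cases hkl : k < ℓ
      · have hk1 : k + 1 ≤ ℓ := hkl
        simp only [if_pos hk1, if_pos (le_of_lt hkl)]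
        have he : ℓ - k = (ℓ - (k+1)) + 1 := by omega
        have hpow : (q:ℤ)^(ℓ - k) = (q:ℤ)^(ℓ - (k+1)) * q := by rw [he, pow_succ]
        have h1 := (hstep k hkl).1
        push_cast
        rw [hpow]
        ring_nf
        ring_nf at h1
        linarith [h1]
      · have hke : k = ℓ := by omega
        subst hke
        simp only [if_pos (le_refl k), if_neg (Nat.not_succ_le_self k)]
        have : k - k = 0 := Nat.sub_self k
        rw [this]
        push_cast
        rw [hqw, hXt, hX, hsl]
        push_cast
        ring

lemma forced (p q : ℕ) (hq : 1 < q) {n m ℓ : ℕ} {w u : ℕ → ℤ}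
    (hb : IsBranch p q (LowAlph q) n w) (hp : IsPath p q (LowAlph q) n m ℓ u) :
    ∀ k < ℓ, w k = u k := by
  obtain ⟨s, hs0, hs⟩ := hb
  obtain ⟨s2, hs20, _, hs2⟩ := hp
  have hq0 : (1:ℤ) < q := by exact_mod_cast hq
  have key : ∀ k, k ≤ ℓ → s k = s2 k ∧ (∀ j < k, w j = u j) := by
    intro k
    induction k with
    | zero => exact fun _ => ⟨hs0.trans hs20.symm, fun j hj => absurd hj (by omega)⟩
    | succ k ih =>
      intro hk
      obtain ⟨hek, hwj⟩ := ih (by omega)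
      have h1 := (hs k).1
      have h2 := (hs2 k (by omega)).1
      have hwk := (hs k).2
      have huk := (hs2 k (by omega)).2
      rw [LowAlph, Set.mem_Icc] at hwk huk
      rw [hek] at h1
      have hdiff : (q:ℤ) * ((s (k+1) : ℤ) - s2 (k+1)) = w k - u k := by
        rw [mul_sub, h1, h2]; ring
      have hz : w k - u k = 0 := by
        refine Int.eq_zero_of_abs_lt_dvd ⟨_, hdiff.symm⟩ ?_
        rw [abs_lt]; constructor <;> linarith [hwk.1, hwk.2, huk.1, huk.2]
      have heq : s (k+1) = s2 (k+1) := by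
        have h0 : (q:ℤ) * ((s (k+1) : ℤ) - s2 (k+1)) = 0 := by rw [hdiff, hz]
        have := (mul_eq_zero.mp h0).resolve_left (by positivity)
        exact_mod_cast sub_eq_zero.mp this
      refine ⟨heq, fun j hj => ?_⟩
      rcases Nat.lt_succ_iff_lt_or_eq.mp hj with h | h
      · exact hwj j h
      · subst h; linarith [hz]
  exact fun k hk => (key (k+1) hk).2 k (Nat.lt_succ_self k)

theorem stmt17 (p q : ℕ) (hco : Nat.Coprime p q) (hq : 1 < q) (hpq : q < p)
    (mw : ℕ → ℕ → ℤ)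
    (hmw : ∀ n, IsBranch p q (LowAlph q) n (mw n)) :
    (∀ (ℓ : ℕ) (u : ℕ → ℤ), (∀ k < ℓ, u k ∈ LowAlph q) →
        ∃ n : ℕ, ∀ k < ℓ, mw n k = u k) ∧
    (∀ w : ℕ → ℤ, (∀ k, w k ∈ LowAlph q) →
        w ∈ closure {v : ℕ → ℤ | ∃ n : ℕ, v = mw n}) := by
  have part1 : ∀ (ℓ : ℕ) (u : ℕ → ℤ), (∀ k < ℓ, u k ∈ LowAlph q) →
      ∃ n : ℕ, ∀ k < ℓ, mw n k = u k := by
    intro ℓ u hu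
    obtain ⟨n, m, hpa⟩ := path_exists p q hco hq ℓ u hu
    exact ⟨n, forced p q hq (hmw n) hpa⟩
  refine ⟨part1, ?_⟩
  intro w hw
  have hsel : ∀ ℓ : ℕ, ∃ n, ∀ k < ℓ, mw n k = w k := fun ℓ => part1 ℓ w (fun k _ => hw k)
  choose N hN using hsel
  refine mem_closure_of_tendsto (f := fun ℓ => mw (N ℓ)) (b := Filter.atTop) ?_ ?_
  · rw [tendsto_pi_nhds]
    intro k
    exact tendsto_atTop_of_eventually_const (i₀ := k + 1)
      (fun ℓ hℓ => hN ℓ k (by omega))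
  · filter_upwards with ℓ using ⟨N ℓ, rfl⟩
end

section
/- Let p and q be coprime integers with p > q > 1. If an ω-word w labels a branch of the tree T_{p/q} from a state n ∈ ℕ and w is purely periodic (there exists T ≥ 1 with w_{k+T} = w_k for all k ≥ 1), then n = 0 and w_k = 0 for all k. -/
theorem eq_zero_of_mul_succ_eq {a b : ℤ} (hab : IsCoprime b a) (hb : b.natAbs ≠ 1)
    {x : ℕ → ℤ} (hx : ∀ j, b * x (j + 1) = a * x j) (k : ℕ) : x k = 0 := by
  have hpow : ∀ j, b ^ j * x (j + k) = a ^ j * x k := by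
    intro j
    induction j with
    | zero => simp
    | succ j ih =>
      rw [pow_succ, pow_succ, show j + 1 + k = (j + k) + 1 by omega]
      linear_combination b ^ j * hx (j + k) + a * ih
  have hdvd : ∀ j, b ^ j ∣ x k := fun j =>
    hab.pow.dvd_of_dvd_mul_left ⟨x (j + k), (hpow j).symm⟩
  by_contra hxk
  obtain ⟨m, hm⟩ := Int.finiteMultiplicity_iff.mpr ⟨hb, hxk⟩
  exact hm (hdvd (m + 1))

theorem Function.Periodic.of_mul_succ_eq_add {p q : ℤ} (hco : IsCoprime q p) (hq : q.natAbs ≠ 1)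
    {s w : ℕ → ℤ} (hs : ∀ k, q * s (k + 1) = p * s k + w k) {T : ℕ}
    (hw : Function.Periodic w T) : Function.Periodic s T := by
  have hd : ∀ k, q * (s (k + 1 + T) - s (k + 1)) = p * (s (k + T) - s k) := by
    intro k
    have hshift := hs (k + T)
    rw [hw, show k + T + 1 = k + 1 + T by omega] at hshift
    linear_combination hshift - hs k
  intro k
  exact sub_eq_zero.mp (eq_zero_of_mul_succ_eq hco hq (x := fun k => s (k + T) - s k) hd k)

theorem monotone_of_mul_succ_eq_add {p q : ℤ} (hqp : q ≤ p) (hq : 0 < q) {s w : ℕ → ℤ}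
    (hs : ∀ k, q * s (k + 1) = p * s k + w k) (hs0 : ∀ k, 0 ≤ s k) (hw0 : ∀ k, 0 ≤ w k) :
    Monotone s :=
  monotone_nat_of_le_succ fun k => by nlinarith [hs k, hs0 k, hw0 k]

theorem Function.Periodic.succ_eq_of_monotone {α : Type*} [PartialOrder α] {f : ℕ → α}
    {T : ℕ} (hper : Function.Periodic f T) (hT : 1 ≤ T) (hmono : Monotone f) (k : ℕ) :
    f (k + 1) = f k :=
  le_antisymm (hper k ▸ hmono (by omega)) (hmono k.le_succ)

theorem stmt18 (p q : ℕ) (hco : Nat.Coprime p q) (hq : 1 < q) (hpq : q < p)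
    (n : ℕ) (w : ℕ → ℤ) (hw : IsBranch p q (Ap p) n w)
    (hper : ∃ T : ℕ, 1 ≤ T ∧ ∀ k, w (k + T) = w k) :
    n = 0 ∧ ∀ k, w k = 0 := by
  obtain ⟨s, rfl, hs⟩ := hw
  obtain ⟨T, hT, hwT⟩ := hper
  have hrec : ∀ k, (q : ℤ) * s (k + 1) = p * s k + w k := fun k => (hs k).1
  have hw0 : ∀ k, 0 ≤ w k := fun k => (hs k).2.1
  have hsT : Function.Periodic (fun k => (s k : ℤ)) T :=
    Function.Periodic.of_mul_succ_eq_add (Nat.isCoprime_iff_coprime.mpr hco.symm)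
      (by rw [Int.natAbs_natCast]; omega) hrec hwT
  have hmono : Monotone (fun k => (s k : ℤ)) :=
    monotone_of_mul_succ_eq_add (by exact_mod_cast hpq.le) (by positivity) hrec
      (fun k => by positivity) hw0
  have hzero : ∀ k, (s k : ℤ) = 0 ∧ w k = 0 := by
    intro k
    have hstep := hrec k
    rw [hsT.succ_eq_of_monotone hT hmono k] at hstep
    have hgap : (0 : ℤ) < p - q := by omega
    constructor <;> nlinarith [hw0 k, (s k).cast_nonneg (α := ℤ)]
  exact ⟨by exact_mod_cast (hzero 0).1, fun k => (hzero k).2⟩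
end
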